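/- The function F(t, r) := A(t,T) e^{-B(t,T) r}, with B(t,T) = (1/k)(1 - e^{-k(T-t)}) and A(t,T) = exp((θ - σ²/(2k²))(B(t,T) + t - T) - (σ²/(4k)) B(t,T)²), solves the Vasicek bond-pricing PDE ∂_t F + k(θ - r)∂_r F + (σ²/2)∂_r² F - r F = 0 on [0,T] × ℝ with terminal condition F(T, r) = 1 for all r. -/

import Mathlib

/-!
For the affine-exponential ansatz `F(t, r) = exp (a t - b t r)`, the Vasicek operator applied to
`F` equals `F` times a polynomial of degree one in `r`; it vanishes identically exactly when `(a, b)`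
solves the Riccati system `b' = k b - 1`, `a' = k θ b - σ² b² / 2`. The closed forms of `B` and
`log A` solve this system and vanish at `t = T`.
-/

open Real

theorem hasDerivAt_const_mul_exp_neg_mul (c β x : ℝ) :
    HasDerivAt (fun y => c * exp (-β * y)) (-β * (c * exp (-β * x))) x := by
  refine ((((hasDerivAt_id x).const_mul (-β)).exp).const_mul c).congr_deriv ?_
  simp only [id]
  ring

theorem deriv_const_mul_exp_neg_mul (c β : ℝ) :
    deriv (fun y => c * exp (-β * y)) = fun x => -β * (c * exp (-β * x)) :=
  funext fun x => (hasDerivAt_const_mul_exp_neg_mul c β x).deriv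

theorem deriv_deriv_const_mul_exp_neg_mul (c β x : ℝ) :
    deriv (deriv fun y => c * exp (-β * y)) x = β ^ 2 * (c * exp (-β * x)) := by
  have h := (hasDerivAt_const_mul_exp_neg_mul c β x).const_mul (-β)
  rw [deriv_const_mul_exp_neg_mul, h.deriv]
  ring

theorem vasicek_pde_exp_affine_of_riccati {a b : ℝ → ℝ} {k θ σ t : ℝ}
    (ha : HasDerivAt a (k * θ * b t - σ ^ 2 / 2 * b t ^ 2) t) (hb : HasDerivAt b (k * b t - 1) t)
    (r : ℝ) :
    deriv (fun s => exp (a s) * exp (-b s * r)) t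
        + k * (θ - r) * deriv (fun x => exp (a t) * exp (-b t * x)) r
        + σ ^ 2 / 2 * deriv (deriv fun x => exp (a t) * exp (-b t * x)) r
        - r * (exp (a t) * exp (-b t * r)) = 0 := by
  have ht : HasDerivAt (fun s => exp (a s) * exp (-b s * r))
      (exp (a t) * (k * θ * b t - σ ^ 2 / 2 * b t ^ 2) * exp (-b t * r)
        + exp (a t) * (exp (-b t * r) * (-(k * b t - 1) * r))) t :=
    ha.exp.mul (hb.neg.mul_const r).exp
  rw [ht.deriv, (hasDerivAt_const_mul_exp_neg_mul _ _ r).deriv,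
    deriv_deriv_const_mul_exp_neg_mul]
  ring

noncomputable def vasicekB (k T t : ℝ) : ℝ := 1 / k * (1 - exp (-k * (T - t)))

noncomputable def vasicekLogA (k θ σ T t : ℝ) : ℝ :=
  (θ - σ ^ 2 / (2 * k ^ 2)) * (vasicekB k T t + t - T) - σ ^ 2 / (4 * k) * vasicekB k T t ^ 2

theorem hasDerivAt_vasicekB {k : ℝ} (hk : k ≠ 0) (T t : ℝ) :
    HasDerivAt (vasicekB k T) (k * vasicekB k T t - 1) t := by
  refine ((((hasDerivAt_id t).const_sub T).const_mul (-k)).exp.const_sub 1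
    |>.const_mul (1 / k)).congr_deriv ?_
  simp only [vasicekB, id]
  field_simp
  ring

theorem hasDerivAt_vasicekLogA {k : ℝ} (hk : k ≠ 0) (θ σ T t : ℝ) :
    HasDerivAt (vasicekLogA k θ σ T)
      (k * θ * vasicekB k T t - σ ^ 2 / 2 * vasicekB k T t ^ 2) t := by
  have hB := hasDerivAt_vasicekB hk T t
  refine ((((hB.add (hasDerivAt_id t)).sub_const T).const_mul (θ - σ ^ 2 / (2 * k ^ 2))).sub
    ((hB.pow 2).const_mul (σ ^ 2 / (4 * k)))).congr_deriv ?_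
  field_simp
  ring

theorem vasicek_bond_pde_general (k θ σ T : ℝ) (hk : 0 < k) :
    let B : ℝ → ℝ := fun t => (1 / k) * (1 - Real.exp (-k * (T - t)))
    let A : ℝ → ℝ := fun t => Real.exp
      ((θ - σ ^ 2 / (2 * k ^ 2)) * (B t + t - T) - σ ^ 2 / (4 * k) * (B t) ^ 2)
    let F : ℝ → ℝ → ℝ := fun t r => A t * Real.exp (-(B t) * r)
    (∀ t ∈ Set.Icc (0 : ℝ) T, ∀ r : ℝ,
      deriv (fun s => F s r) t + k * (θ - r) * deriv (fun x => F t x) r +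
        σ ^ 2 / 2 * deriv (deriv (fun x => F t x)) r - r * F t r = 0) ∧
    ∀ r : ℝ, F T r = 1 := by
  intro B A F
  refine ⟨fun t _ r => ?_, fun r => by simp [F, A, B]⟩
  exact vasicek_pde_exp_affine_of_riccati (hasDerivAt_vasicekLogA hk.ne' θ σ T t)
    (hasDerivAt_vasicekB hk.ne' T t) r

/-- The Vasicek zero-coupon bond price function `F(t,r) = A(t,T) e^{-B(t,T) r}` solves
the term-structure PDE `∂_t F + k(θ - r)∂_r F + (σ²/2)∂_r² F - r F = 0` on `[0,T] × ℝ`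
with terminal condition `F(T, r) = 1`. -/
theorem vasicek_bond_pde (k θ σ T : ℝ) (hk : 0 < k) (hT : 0 < T) :
    let B : ℝ → ℝ := fun t => (1 / k) * (1 - Real.exp (-k * (T - t)))
    let A : ℝ → ℝ := fun t => Real.exp
      ((θ - σ ^ 2 / (2 * k ^ 2)) * (B t + t - T) - σ ^ 2 / (4 * k) * (B t) ^ 2)
    let F : ℝ → ℝ → ℝ := fun t r => A t * Real.exp (-(B t) * r)
    (∀ t ∈ Set.Icc (0 : ℝ) T, ∀ r : ℝ,
      deriv (fun s => F s r) t + k * (θ - r) * deriv (fun x => F t x) r +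
        σ ^ 2 / 2 * deriv (deriv (fun x => F t x)) r - r * F t r = 0) ∧
    ∀ r : ℝ, F T r = 1 :=
  vasicek_bond_pde_general k θ σ T hk
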